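/- arXiv:2305.06982 — 3 statements merged into one kernel-verified Lean document; each statement's English description precedes it below -/
import Mathlib

section
/- (Position in the arithmetical hierarchy) Let A ⊆ ℕ be an infinite computably enumerable set and let θ be a quasi-Gödel numbering of S_A. Let T₁ = {i | θ i is an initial-segment function for A} and T₂ = {i | θ i is total}. Then: (a) T₁ is Σ₂-complete, i.e. there is a decidable computable relation R ⊆ ℕ × ℕ × ℕ with i ∈ T₁ ↔ ∃ x ∀ y, R(i,x,y), and for every decidable computable relation Z ⊆ ℕ × ℕ × ℕ the set {i | ∃ x ∀ y, Z(i,x,y)} one-one reduces to T₁ via an injective total computable function; (b) T₂ is Π₂-complete, i.e. there is a decidable computable relation R' with i ∈ T₂ ↔ ∀ x ∃ y, R'(i,x,y), and every set of the form {i | ∀ x ∃ y, Z(i,x,y)} with Z decidable computable one-one reduces to T₂. -/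
/-- `r : ℕ →. ℕ` is an initial-segment function for `A`: its domain is empty or
equals `{m | m < a}` for some `a ∈ A`. -/
def IsInitSeg (A : Set ℕ) (r : ℕ →. ℕ) : Prop :=
  {x : ℕ | (r x).Dom} = (∅ : Set ℕ) ∨ ∃ a ∈ A, {x : ℕ | (r x).Dom} = {m : ℕ | m < a}

/-- `SA A` is the class of unary partial functions that are either total computable
or initial-segment functions for `A`. -/
def SA (A : Set ℕ) : Set (ℕ →. ℕ) :=
  {r | (∃ f : ℕ → ℕ, Computable f ∧ ∀ x, r x = Part.some (f x)) ∨ IsInitSeg A r}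

/-- The extended graph of a unary partial function. -/
def graphE (q : ℕ →. ℕ) : Set ℕ :=
  {n | ∃ y, n = Nat.pair y 0} ∪ {n | ∃ x z, q x = Part.some z ∧ n = Nat.pair x (z + 1)}

/-- The graph of a unary partial function. -/
def pgraph (q : ℕ →. ℕ) : Set ℕ :=
  {n | ∃ x z, q x = Part.some z ∧ n = Nat.pair x z}

/-- Condition (QGN I): the extended graph of the universal function of `θ` is
enumerated by a total computable function. -/
def QGN1 (θ : ℕ → ℕ →. ℕ) : Prop :=
  ∃ h : ℕ → ℕ, Computable h ∧
    Set.range h = {n | ∃ w, n = Nat.pair w 0} ∪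
      {n | ∃ i x z, θ i x = Part.some z ∧ n = Nat.pair (Nat.pair i x) (z + 1)}

/-- Condition (QGN II). -/
def QGN2 (A : Set ℕ) (θ : ℕ → ℕ →. ℕ) : Prop :=
  ∀ k : ℕ → ℕ → ℕ, Computable₂ k →
    ∃ v : ℕ → ℕ, Computable v ∧
      ∀ i, ∀ r ∈ SA A, Set.range (k i) = graphE r → θ (v i) = r

/-- A quasi-Gödel numbering of `SA A`. -/
def QuasiGodel (A : Set ℕ) (θ : ℕ → ℕ →. ℕ) : Prop :=
  Set.range θ = SA A ∧ QGN1 θ ∧ QGN2 A θ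

/-- A set of naturals is computably enumerable. -/
def CEset (C : Set ℕ) : Prop :=
  C = ∅ ∨ ∃ g : ℕ → ℕ, Computable g ∧ C = Set.range g

/-- The standard Gödel numbering of the unary partial recursive functions. -/
def phi (i : ℕ) : ℕ →. ℕ :=
  Nat.Partrec.Code.eval (Denumerable.ofNat Nat.Partrec.Code i)

/-!
A Σ₂ predicate `∃ x, ∀ y, W i x y` is turned into a downward closed Σ₁ set
`Tᵢ = {t | ∀ x < t, ∃ y, ¬ W i x y}`, which is finite if some `x` succeeds forever and is all of
`ℕ` otherwise. With `g` an unbounded computable enumeration inside `A`, the set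
`Dᵢ = ⋃ t ∈ Tᵢ, [0, g t)` is therefore either `[0, a)` with `a ∈ A` or all of `ℕ`. The constant
function `i` on `Dᵢ` lies in `S_A` and its extended graph is uniformly c.e., so (QGN II) yields
computable indices `v i` for it; `v` is injective because `0 ∈ Dᵢ`. This reduces Σ₂ predicates to
non-totality, and by complementation Π₂ predicates to totality. For the upper bounds, (QGN I)
makes `θ i x ↓` a Σ₁ relation, and a member of `S_A` is an initial-segment function exactly when
it is not total.
-/

theorem Computable.decide_forall_lt {α : Type*} [Primcodable α] {f : α → ℕ} {p : α → ℕ → Bool}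
    (hf : Computable f) (hp : Computable₂ p) :
    Computable fun a => decide (∀ k < f a, p a k = true) := by
  refine (Computable.nat_rec hf (Computable.const true)
    (Primrec.and.to_comp.comp (Computable.snd.comp Computable.snd)
      (hp.comp Computable.fst (Computable.fst.comp Computable.snd))).to₂).of_eq fun a => ?_
  induction f a with
  | zero => simp
  | succ n ih => simp [ih, Nat.le_iff_lt_or_eq, or_imp, forall_and]

theorem forall_lt_exists_iff_exists_forall_lt_exists_lt {n : ℕ} {p : ℕ → ℕ → Prop} :
    (∀ x < n, ∃ y, p x y) ↔ ∃ s, ∀ x < n, ∃ y < s, p x y := by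
  refine ⟨fun h => ?_, fun ⟨s, h⟩ x hx => (h x hx).imp fun _ => And.right⟩
  choose! y hy using h
  refine ⟨(Finset.range n).sup y + 1, fun x hx => ⟨y x, ?_, hy x hx⟩⟩
  exact Nat.lt_succ_of_le (Finset.le_sup (Finset.mem_range.2 hx))

theorem Set.Finite.exists_biUnion_Iio_eq {ι α : Type*} [LinearOrder α] {S : Set ι}
    (hS : S.Finite) (hne : S.Nonempty) (g : ι → α) :
    ∃ t ∈ S, ⋃ s ∈ S, Set.Iio (g s) = Set.Iio (g t) := by
  obtain ⟨t, ht, hmax⟩ := S.exists_max_image g hS hne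
  exact ⟨t, ht, (Set.iUnion₂_subset fun s hs => Set.Iio_subset_Iio (hmax s hs)).antisymm
    (Set.subset_biUnion_of_mem (u := fun s => Set.Iio (g s)) ht)⟩

theorem PFun.res_eq_some_iff {α β : Type*} {f : α → β} {s : Set α} {a : α} {b : β} :
    PFun.res f s a = Part.some b ↔ a ∈ s ∧ f a = b := by
  rw [Part.eq_some_iff, PFun.mem_res]

theorem OneOneReducible.not {α β : Type*} [Primcodable α] [Primcodable β] {p : α → Prop}
    {q : β → Prop} (h : OneOneReducible p q) :
    OneOneReducible (fun a => ¬ p a) (fun b => ¬ q b) :=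
  let ⟨f, hf, hinj, hpq⟩ := h
  ⟨f, hf, hinj, fun a => (hpq a).not⟩

theorem setOf_forall_lt_exists_false_finite {w : ℕ → ℕ → Bool} (h : ∃ x, ∀ y, w x y = true) :
    {t | ∀ x < t, ∃ y, w x y = false}.Finite := by
  obtain ⟨x₀, hx₀⟩ := h
  refine (Set.finite_Iic x₀).subset fun t ht => Set.mem_Iic.mpr (not_lt.mp fun hlt => ?_)
  obtain ⟨y, hy⟩ := ht x₀ hlt
  simp [hx₀ y] at hy

theorem setOf_forall_lt_exists_false_eq_univ {w : ℕ → ℕ → Bool} (h : ¬ ∃ x, ∀ y, w x y = true) :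
    {t | ∀ x < t, ∃ y, w x y = false} = Set.univ := by
  simp only [not_exists, not_forall, Bool.not_eq_true] at h
  exact Set.eq_univ_of_forall fun t x _ => h x

theorem exists_computable_range_eq_graphE_res {f : ℕ → ℕ → ℕ} {P : ℕ → ℕ → ℕ → Bool}
    (hf : Computable₂ f) (hP : Computable fun p : ℕ × ℕ × ℕ => P p.1 p.2.1 p.2.2) :
    ∃ k : ℕ → ℕ → ℕ, Computable₂ k ∧
      ∀ i, Set.range (k i) = graphE (PFun.res (f i) {m | ∃ a, P i m a = true}) := by
  -- input `⟪m, 0⟫` lists the padding point `⟪m, 0⟫`; input `⟪m, a + 1⟫` tests witness `a` for `m`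
  let k : ℕ → ℕ → ℕ := fun i n => Nat.pair n.unpair.1
    (Nat.casesOn n.unpair.2 0 fun a => bif P i n.unpair.1 a then f i n.unpair.1 + 1 else 0)
  refine ⟨k, ?_, fun i => ?_⟩
  · have hm : Computable fun p : ℕ × ℕ => p.2.unpair.1 :=
      (Primrec.fst.comp Primrec.unpair).to_comp.comp Computable.snd
    have hc : Computable fun q : (ℕ × ℕ) × ℕ => P q.1.1 q.1.2.unpair.1 q.2 := by
      have := hP.comp ((Computable.fst.comp Computable.fst).pair
        ((hm.comp Computable.fst).pair Computable.snd))
      exact this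
    have hv : Computable fun q : (ℕ × ℕ) × ℕ => f q.1.1 q.1.2.unpair.1 + 1 :=
      Computable.succ.comp (hf.comp (Computable.fst.comp Computable.fst) (hm.comp Computable.fst))
    have hs : Computable₂ fun (p : ℕ × ℕ) a =>
        bif P p.1 p.2.unpair.1 a then f p.1 p.2.unpair.1 + 1 else 0 :=
      Computable.cond hc hv (Computable.const 0)
    exact Primrec₂.natPair.to_comp.comp hm (Computable.nat_casesOn
      ((Primrec.snd.comp Primrec.unpair).to_comp.comp Computable.snd) (Computable.const 0) hs)
  · ext n
    simp only [Set.mem_range, graphE, Set.mem_union, Set.mem_ofPred_eq, PFun.res_eq_some_iff]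
    constructor
    · rintro ⟨n, rfl⟩
      rcases h : n.unpair.2 with _ | a
      · exact Or.inl ⟨n.unpair.1, by simp [k, h]⟩
      · cases hP : P i n.unpair.1 a
        · exact Or.inl ⟨n.unpair.1, by simp [k, h, hP]⟩
        · exact Or.inr ⟨n.unpair.1, f i n.unpair.1, ⟨⟨a, hP⟩, rfl⟩, by simp [k, h, hP]⟩
    · rintro (⟨m, rfl⟩ | ⟨m, _, ⟨⟨a, ha⟩, rfl⟩, rfl⟩)
      · exact ⟨Nat.pair m 0, by simp [k]⟩
      · exact ⟨Nat.pair m (a + 1), by simp [k, ha]⟩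

theorem exists_computable_mem_biUnion_Iio_iff {W : ℕ → ℕ → ℕ → Bool}
    (hW : Computable fun p : ℕ × ℕ × ℕ => W p.1 p.2.1 p.2.2) {g : ℕ → ℕ} (hg : Computable g) :
    ∃ P : ℕ → ℕ → ℕ → Bool, Computable (fun p : ℕ × ℕ × ℕ => P p.1 p.2.1 p.2.2) ∧
      ∀ i m, (∃ a, P i m a = true) ↔
        m ∈ ⋃ t ∈ {t | ∀ x < t, ∃ y, W i x y = false}, Set.Iio (g t) := by
  -- the witness `a` codes a length `t` and a common search bound `s` for the failures below `t`
  refine ⟨fun i m a =>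
    decide (∀ x < a.unpair.1, (!decide (∀ y < a.unpair.2, W i x y = true)) = true) &&
      decide (m < g a.unpair.1), ?_, fun i m => ?_⟩
  · have ht : Computable fun p : ℕ × ℕ × ℕ => p.2.2.unpair.1 :=
      (Primrec.fst.comp Primrec.unpair).to_comp.comp (Computable.snd.comp Computable.snd)
    have hs : Computable fun q : (ℕ × ℕ × ℕ) × ℕ => q.1.2.2.unpair.2 :=
      (Primrec.snd.comp Primrec.unpair).to_comp.comp
        (Computable.snd.comp (Computable.snd.comp Computable.fst))
    have hWq : Computable₂ fun (q : (ℕ × ℕ × ℕ) × ℕ) y => W q.1.1 q.2 y := by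
      have hi : Computable fun q : ((ℕ × ℕ × ℕ) × ℕ) × ℕ => q.1.1.1 :=
        Computable.fst.comp (Computable.fst.comp Computable.fst)
      have := hW.comp (hi.pair ((Computable.snd.comp Computable.fst).pair Computable.snd))
      exact this
    have hfail : Computable₂ fun (p : ℕ × ℕ × ℕ) x =>
        !decide (∀ y < p.2.2.unpair.2, W p.1 x y = true) :=
      Primrec.not.to_comp.comp (Computable.decide_forall_lt hs hWq)
    exact Primrec.and.to_comp.comp (Computable.decide_forall_lt ht hfail)
      (Primrec.nat_lt.decide.to_comp.comp (Computable.fst.comp Computable.snd) (hg.comp ht))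
  · simp only [Set.mem_iUnion, Set.mem_Iio, Set.mem_ofPred_eq, exists_prop, Bool.and_eq_true,
      decide_eq_true_eq, Bool.not_eq_true', decide_eq_false_iff_not, not_forall, Bool.not_eq_true,
      forall_lt_exists_iff_exists_forall_lt_exists_lt (p := fun x y => W i x y = false)]
    constructor
    · rintro ⟨a, hfail, hm⟩
      exact ⟨a.unpair.1, ⟨a.unpair.2, fun x hx => by simpa using hfail x hx⟩, hm⟩
    · rintro ⟨t, ⟨s, hfail⟩, hm⟩
      exact ⟨Nat.pair t s, by simpa using hfail, by simpa using hm⟩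

theorem isInitSeg_iff_not_total {A : Set ℕ} {r : ℕ →. ℕ} (hr : r ∈ SA A) :
    IsInitSeg A r ↔ ¬ ∀ x, (r x).Dom := by
  constructor
  · rintro (hdom | ⟨a, -, hdom⟩) htot
    · exact (hdom ▸ htot 0 : (0 : ℕ) ∈ (∅ : Set ℕ))
    · exact lt_irrefl a (hdom ▸ htot a : a ∈ {m : ℕ | m < a})
  · intro hpart
    rcases hr with ⟨f, -, hf⟩ | hinit
    · exact absurd (fun x => (hf x).symm ▸ trivial) hpart
    · exact hinit

theorem QGN1.exists_dom_iff {θ : ℕ → ℕ →. ℕ} (hθ : QGN1 θ) :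
    ∃ E : ℕ → ℕ → ℕ → Bool, Computable (fun p : ℕ × ℕ × ℕ => E p.1 p.2.1 p.2.2) ∧
      ∀ i x, (θ i x).Dom ↔ ∃ y, E i x y = true := by
  obtain ⟨h, hh, hrange⟩ := hθ
  refine ⟨fun i x y => decide ((h y).unpair.1 = Nat.pair i x) && decide (0 < (h y).unpair.2),
    ?_, fun i x => ⟨fun hdom => ?_, fun ⟨y, hy⟩ => ?_⟩⟩
  · have hy : Computable fun p : ℕ × ℕ × ℕ => (h p.2.2).unpair :=
      Primrec.unpair.to_comp.comp (hh.comp (Computable.snd.comp Computable.snd))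
    have hix : Computable fun p : ℕ × ℕ × ℕ => Nat.pair p.1 p.2.1 :=
      Primrec₂.natPair.to_comp.comp Computable.fst (Computable.fst.comp Computable.snd)
    exact Primrec.and.to_comp.comp (Primrec.eq.decide.to_comp.comp (Computable.fst.comp hy) hix)
      (Primrec.nat_lt.decide.to_comp.comp (Computable.const 0) (Computable.snd.comp hy))
  · obtain ⟨y, hy⟩ : Nat.pair (Nat.pair i x) ((θ i x).get hdom + 1) ∈ Set.range h :=
      hrange ▸ Or.inr ⟨i, x, _, Part.get_eq_iff_eq_some.mp rfl, rfl⟩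
    exact ⟨y, by simp [hy]⟩
  · simp only [Bool.and_eq_true, decide_eq_true_eq] at hy
    rcases (hrange ▸ Set.mem_range_self y : h y ∈ _) with ⟨w, hw⟩ | ⟨j, x', z, hz, hw⟩
    · simp [hw] at hy
    · obtain ⟨rfl, rfl⟩ := Nat.pair_eq_pair.mp (by simpa [hw] using hy.1)
      exact hz ▸ trivial

theorem CEset.exists_computable_unbounded {A : Set ℕ} (hAinf : A.Infinite) (hAce : CEset A) :
    ∃ g : ℕ → ℕ, Computable g ∧ (∀ t, g t ∈ A) ∧ 0 < g 0 ∧ ¬ BddAbove (Set.range g) := by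
  obtain ⟨g, hg, rfl⟩ := hAce.resolve_left hAinf.nonempty.ne_empty
  obtain ⟨-, ⟨t₁, rfl⟩, ht₁⟩ := hAinf.exists_gt 0
  -- `max (g t₁) (g t)` is always a value of `g`, and it is positive already at `t = 0`
  refine ⟨fun t => max (g t₁) (g t), Primrec.nat_max.to_comp.comp (Computable.const _) hg,
    fun t => ?_, ht₁.trans_le (le_max_left _ _), fun ⟨B, hB⟩ => hAinf.not_bddAbove ⟨B, ?_⟩⟩
  · rcases max_choice (g t₁) (g t) with h | h <;> exact ⟨_, h.symm⟩
  · rintro _ ⟨t, rfl⟩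
    exact (le_max_right _ _).trans (hB ⟨t, rfl⟩)

theorem QGN2.oneOneReducible_not_total {A : Set ℕ} {θ : ℕ → ℕ →. ℕ} (hθ : QGN2 A θ)
    {g : ℕ → ℕ} (hg : Computable g) (hgA : ∀ t, g t ∈ A) (hg0 : 0 < g 0)
    (hgu : ¬ BddAbove (Set.range g)) {W : ℕ → ℕ → ℕ → Bool}
    (hW : Computable fun p : ℕ × ℕ × ℕ => W p.1 p.2.1 p.2.2) :
    OneOneReducible (fun i => ∃ x, ∀ y, W i x y = true) (fun j => ¬ ∀ x, (θ j x).Dom) := by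
  set T : ℕ → Set ℕ := fun i => {t | ∀ x < t, ∃ y, W i x y = false}
  set D : ℕ → Set ℕ := fun i => ⋃ t ∈ T i, Set.Iio (g t)
  set r : ℕ → ℕ →. ℕ := fun i => PFun.res (fun _ => i) (D i)
  have hT0 : ∀ i, 0 ∈ T i := fun i x hx => absurd hx (Nat.not_lt_zero x)
  have hD_seg : ∀ i, (∃ x, ∀ y, W i x y = true) → ∃ t, D i = Set.Iio (g t) := fun i h =>
    let ⟨t, _, ht⟩ := (setOf_forall_lt_exists_false_finite h).exists_biUnion_Iio_eq ⟨0, hT0 i⟩ g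
    ⟨t, ht⟩
  have hD_univ : ∀ i, ¬ (∃ x, ∀ y, W i x y = true) → D i = Set.univ := fun i h => by
    simp only [D, T, setOf_forall_lt_exists_false_eq_univ h, Set.biUnion_univ]
    exact iUnion_Iio_eq_univ_iff.mpr hgu
  have hSA : ∀ i, r i ∈ SA A := by
    intro i
    by_cases h : ∃ x, ∀ y, W i x y = true
    · obtain ⟨t, ht⟩ := hD_seg i h
      exact Or.inr (Or.inr ⟨g t, hgA t, ht⟩)
    · exact Or.inl ⟨fun _ => i, Computable.const i, fun x =>
        Part.eq_some_iff.mpr ((PFun.mem_res _ _ _ _).mpr ⟨hD_univ i h ▸ trivial, rfl⟩)⟩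
  obtain ⟨P, hP, hPD⟩ := exists_computable_mem_biUnion_Iio_iff hW hg
  obtain ⟨k, hk, hkr⟩ := exists_computable_range_eq_graphE_res (f := fun i _ => i)
    Computable.fst hP
  obtain ⟨v, hv, hvr⟩ := hθ k hk
  have hθv : ∀ i, θ (v i) = r i := fun i =>
    hvr i (r i) (hSA i) (by rw [hkr i]; congr; ext m; exact hPD i m)
  refine ⟨v, hv, fun i j hij => ?_, fun i => ?_⟩
  · have h0 : ∀ i, r i 0 = Part.some i := fun i =>
      PFun.res_eq_some_iff.mpr ⟨Set.mem_biUnion (hT0 i) hg0, rfl⟩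
    simpa [h0, hθv] using congr_fun (congr_arg θ hij) 0
  · simp only [hθv]
    constructor
    · intro h htot
      obtain ⟨t, ht⟩ := hD_seg i h
      exact lt_irrefl (g t) (ht ▸ htot (g t) : g t ∈ Set.Iio (g t))
    · intro hpart
      by_contra h
      exact hpart fun x => (hD_univ i h ▸ Set.mem_univ x : x ∈ D i)

/-- Position in the arithmetical hierarchy: the set of indices of initial-segment
functions is Σ₂-complete; the set of indices of total functions is Π₂-complete. -/
theorem arithmetical_position (A : Set ℕ) (hAinf : A.Infinite) (hAce : CEset A)
    (θ : ℕ → ℕ →. ℕ) (hθ : QuasiGodel A θ) :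
    ((∃ R : ℕ → ℕ → ℕ → Bool,
        Computable (fun p : ℕ × ℕ × ℕ => R p.1 p.2.1 p.2.2) ∧
        (∀ i, IsInitSeg A (θ i) ↔ ∃ x, ∀ y, R i x y = true) ∧
        ∀ Z : ℕ → ℕ → ℕ → Bool,
          Computable (fun p : ℕ × ℕ × ℕ => Z p.1 p.2.1 p.2.2) →
          OneOneReducible (fun i => ∃ x, ∀ y, Z i x y = true)
            (fun i => IsInitSeg A (θ i)))) ∧
    ((∃ R' : ℕ → ℕ → ℕ → Bool,
        Computable (fun p : ℕ × ℕ × ℕ => R' p.1 p.2.1 p.2.2) ∧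
        (∀ i, (∀ x, (θ i x).Dom) ↔ ∀ x, ∃ y, R' i x y = true) ∧
        ∀ Z : ℕ → ℕ → ℕ → Bool,
          Computable (fun p : ℕ × ℕ × ℕ => Z p.1 p.2.1 p.2.2) →
          OneOneReducible (fun i => ∀ x, ∃ y, Z i x y = true)
            (fun i => ∀ x, (θ i x).Dom))) := by
  obtain ⟨hrange, hq1, hq2⟩ := hθ
  obtain ⟨E, hE, hdom⟩ := hq1.exists_dom_iff
  obtain ⟨g, hg, hgA, hg0, hgu⟩ := hAce.exists_computable_unbounded hAinf
  have hinit : (fun i => IsInitSeg A (θ i)) = fun i => ¬ ∀ x, (θ i x).Dom :=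
    funext fun i => propext (isInitSeg_iff_not_total (hrange ▸ Set.mem_range_self i))
  have hred := fun (W : ℕ → ℕ → ℕ → Bool)
      (hW : Computable fun p : ℕ × ℕ × ℕ => W p.1 p.2.1 p.2.2) =>
    hq2.oneOneReducible_not_total hg hgA hg0 hgu hW
  refine ⟨⟨fun i x y => !E i x y, Primrec.not.to_comp.comp hE, fun i => ?_, fun Z hZ => ?_⟩,
    ⟨E, hE, fun i => forall_congr' (hdom i), fun Z hZ => ?_⟩⟩
  · simp [congr_fun hinit i, hdom]
  · exact hinit ▸ hred Z hZ
  · simpa using (hred (fun i x y => !Z i x y) (Primrec.not.to_comp.comp hZ)).not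
end

section
/- (Isomorphism Theorem for quasi-Gödel numberings) Let A ⊆ ℕ be an infinite computably enumerable set, and let θ and ψ be two quasi-Gödel numberings of S_A. Then θ and ψ are computably isomorphic: there is a bijective total computable g : ℕ → ℕ such that θ i = ψ (g i) for all i. -/
open Nat.Partrec (Code)
open Nat.Partrec.Code Encodable Denumerable

theorem Primrec.list_lookup {α β : Type*} [Primcodable α] [Primcodable β] [DecidableEq α] :
    Primrec₂ fun (l : List (α × β)) (a : α) => l.lookup a := by
  have h : Primrec₂ fun (l : List (α × β)) (a : α) =>
      l.foldr (fun p o => if a = p.1 then some p.2 else o) none :=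
    Primrec.list_foldr (h := fun (q : List (α × β) × α) (s : (α × β) × Option β) =>
        if q.2 = s.1.1 then some s.1.2 else s.2) Primrec.fst (Primrec.const none)
      (Primrec.ite (Primrec.eq.comp (Primrec.snd.comp Primrec.fst)
          (Primrec.fst.comp (Primrec.fst.comp Primrec.snd)))
        (Primrec.option_some.comp (Primrec.snd.comp (Primrec.fst.comp Primrec.snd)))
        (Primrec.snd.comp Primrec.snd))
  refine h.of_eq fun l a => ?_
  induction l with
  | nil => rfl
  | cons p l ih =>
    rw [List.foldr_cons, ih, List.lookup_cons]
    by_cases hap : a = p.1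
    · subst hap; simp
    · simp [hap, beq_false_of_ne hap]

theorem Primrec.list_mem {α : Type*} [Primcodable α] [DecidableEq α] :
    PrimrecRel fun (l : List α) (a : α) => a ∈ l :=
  (PrimrecRel.exists_mem_list Primrec.eq).of_eq fun l a => by simp

theorem Primrec.list_map_fst {α β : Type*} [Primcodable α] [Primcodable β] :
    Primrec fun l : List (α × β) => l.map Prod.fst :=
  Primrec.list_map Primrec.id (Primrec.fst.comp₂ Primrec₂.right)

theorem Primrec.list_map_snd {α β : Type*} [Primcodable α] [Primcodable β] :
    Primrec fun l : List (α × β) => l.map Prod.snd :=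
  Primrec.list_map Primrec.id (Primrec.snd.comp₂ Primrec₂.right)

theorem List.mem_lookup_getD {α β : Type*} [DecidableEq α] {l : List (α × β)} {a : α}
    (ha : a ∈ l.map Prod.fst) (d : β) : (a, (l.lookup a).getD d) ∈ l := by
  obtain ⟨p, hp, rfl⟩ := List.mem_map.1 ha
  obtain ⟨b, hb⟩ :=
    Option.isSome_iff_exists.1 (List.lookup_isSome_iff.2 ⟨p, hp, beq_self_eq_true _⟩)
  obtain ⟨l₁, l₂, rfl, -⟩ := List.lookup_eq_some_iff.1 hb
  simp [hb]

theorem Computable₂.decide_exists_lt_eq {α β : Type*} [Primcodable α] [Primcodable β]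
    [DecidableEq β] {J : α → ℕ → β} (hJ : Computable₂ J) :
    Computable₂ fun a n => decide (∃ q < n, J a q = J a n) := by
  have hex : ∀ p : α × ℕ, ∃ q, J p.1 q = J p.1 p.2 := fun p => ⟨p.2, rfl⟩
  have hrepeat : ComputablePred fun p : (α × ℕ) × ℕ => J p.1.1 p.2 = J p.1.1 p.1.2 :=
    ⟨inferInstance, Primrec.eq.decide.to_comp.comp
      (hJ.comp (Computable.fst.comp Computable.fst) Computable.snd)
      (hJ.comp (Computable.fst.comp Computable.fst) (Computable.snd.comp Computable.fst))⟩
  have hfind : Computable fun p : α × ℕ => Nat.find (hex p) := Computable.find hrepeat hex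
  exact (Primrec.nat_lt.decide.to_comp.comp hfind Computable.snd).of_eq fun p => by
    simp [Nat.find_lt_iff]

theorem infinite_range_of_forall_exists_fresh {α : Type*} {g : ℕ → α}
    (h : ∀ N, ∃ n > N, ∀ q < n, g q ≠ g n) : (Set.range g).Infinite := by
  have hfresh : {n | ∀ q < n, g q ≠ g n}.Infinite :=
    Set.infinite_of_forall_exists_gt fun N => (h N).imp fun _ hn => ⟨hn.2, hn.1⟩
  have hinj : Set.InjOn g {n | ∀ q < n, g q ≠ g n} := by
    intro n hn m hm hnm
    by_contra hne
    rcases Nat.lt_or_gt_of_ne hne with hlt | hlt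
    · exact hm n hlt hnm
    · exact hn m hlt hnm.symm
  exact (hfresh.image hinj).mono (Set.image_subset_range _ _)

theorem exists_computable_fresh {α β : Type*} [Primcodable α] [Primcodable β] [DecidableEq β]
    {J : α → ℕ → β} (hJ : Computable₂ J) (hinf : ∀ a, (Set.range (J a)).Infinite) :
    ∃ fr : α → List β → β, Computable₂ fr ∧ ∀ a L, fr a L ∈ Set.range (J a) ∧ fr a L ∉ L := by
  have hex : ∀ p : α × List β, ∃ n, J p.1 n ∉ p.2 := fun p => by
    obtain ⟨_, ⟨n, rfl⟩, hn⟩ := (hinf p.1).exists_notMem_finset p.2.toFinset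
    exact ⟨n, by simpa using hn⟩
  have hfresh : ComputablePred fun p : (α × List β) × ℕ => J p.1.1 p.2 ∉ p.1.2 :=
    ⟨inferInstance, Primrec.list_mem.not.decide.to_comp.comp (Computable.snd.comp Computable.fst)
      (hJ.comp (Computable.fst.comp Computable.fst) Computable.snd)⟩
  have hfind : Computable fun p : α × List β => Nat.find (hex p) := Computable.find hfresh hex
  exact ⟨fun a L => J a (Nat.find (hex (a, L))), hJ.comp Computable.fst hfind,
    fun a L => ⟨Set.mem_range_self _, Nat.find_spec (hex (a, L))⟩⟩

section BackAndForth

variable {R : ℕ → ℕ → Prop} {f g : ℕ → List ℕ → ℕ}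

def IsMatching (R : ℕ → ℕ → Prop) (σ : List (ℕ × ℕ)) : Prop :=
  ∀ p ∈ σ, R p.1 p.2 ∧ ∀ q ∈ σ, (p.1 = q.1 ↔ p.2 = q.2)

theorem IsMatching.nil : IsMatching R [] := by simp [IsMatching]

theorem IsMatching.cons {σ : List (ℕ × ℕ)} (hσ : IsMatching R σ) {a b : ℕ} (hab : R a b)
    (ha : a ∉ σ.map Prod.fst) (hb : b ∉ σ.map Prod.snd) : IsMatching R ((a, b) :: σ) := by
  have hne : ∀ q ∈ σ, a ≠ q.1 ∧ b ≠ q.2 := fun q hq =>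
    ⟨fun h => ha (h ▸ List.mem_map_of_mem hq), fun h => hb (h ▸ List.mem_map_of_mem hq)⟩
  rintro p (_ | ⟨_, hp⟩)
  · refine ⟨hab, ?_⟩
    rintro q (_ | ⟨_, hq⟩)
    · exact iff_of_true rfl rfl
    · exact iff_of_false (hne q hq).1 (hne q hq).2
  · refine ⟨(hσ p hp).1, ?_⟩
    rintro q (_ | ⟨_, hq⟩)
    · exact iff_of_false (fun h => (hne p hp).1 h.symm) (fun h => (hne p hp).2 h.symm)
    · exact (hσ p hp).2 q hq

def forthStep (f : ℕ → List ℕ → ℕ) (n : ℕ) (σ : List (ℕ × ℕ)) : List (ℕ × ℕ) :=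
  if n ∈ σ.map Prod.fst then σ else (n, f n (σ.map Prod.snd)) :: σ

def backStep (g : ℕ → List ℕ → ℕ) (n : ℕ) (σ : List (ℕ × ℕ)) : List (ℕ × ℕ) :=
  if n ∈ σ.map Prod.snd then σ else (g n (σ.map Prod.fst), n) :: σ

theorem IsMatching.forthStep {σ : List (ℕ × ℕ)} (hσ : IsMatching R σ)
    (hf : ∀ i L, R i (f i L) ∧ f i L ∉ L) (n : ℕ) : IsMatching R (forthStep f n σ) := by
  unfold _root_.forthStep
  split_ifs with hn
  · exact hσ
  · exact hσ.cons (hf n _).1 hn (hf n _).2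

theorem IsMatching.backStep {σ : List (ℕ × ℕ)} (hσ : IsMatching R σ)
    (hg : ∀ j L, R (g j L) j ∧ g j L ∉ L) (n : ℕ) : IsMatching R (backStep g n σ) := by
  unfold _root_.backStep
  split_ifs with hn
  · exact hσ
  · exact hσ.cons (hg n _).1 (hg n _).2 hn

theorem subset_forthStep (f : ℕ → List ℕ → ℕ) (n : ℕ) (σ : List (ℕ × ℕ)) :
    σ ⊆ forthStep f n σ := by
  unfold forthStep
  split_ifs
  exacts [List.Subset.refl σ, List.subset_cons_self _ σ]

theorem subset_backStep (g : ℕ → List ℕ → ℕ) (n : ℕ) (σ : List (ℕ × ℕ)) :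
    σ ⊆ backStep g n σ := by
  unfold backStep
  split_ifs
  exacts [List.Subset.refl σ, List.subset_cons_self _ σ]

theorem mem_map_fst_forthStep (f : ℕ → List ℕ → ℕ) (n : ℕ) (σ : List (ℕ × ℕ)) :
    n ∈ (forthStep f n σ).map Prod.fst := by
  unfold forthStep
  split_ifs with hn
  exacts [hn, List.mem_cons_self]

theorem mem_map_snd_backStep (g : ℕ → List ℕ → ℕ) (n : ℕ) (σ : List (ℕ × ℕ)) :
    n ∈ (backStep g n σ).map Prod.snd := by
  unfold backStep
  split_ifs with hn
  exacts [hn, List.mem_cons_self]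

theorem computable_forthStep (hf : Computable₂ f) : Computable₂ (forthStep f) := by
  have hfst := Primrec.list_map_fst (α := ℕ) (β := ℕ) |>.to_comp
  have hsnd := Primrec.list_map_snd (α := ℕ) (β := ℕ) |>.to_comp
  refine (Computable.cond (Primrec.list_mem.decide.to_comp.comp (hfst.comp Computable.snd)
      Computable.fst) Computable.snd (Computable.list_cons.comp
        (Computable.pair Computable.fst (hf.comp Computable.fst (hsnd.comp Computable.snd)))
        Computable.snd)).of_eq fun p => ?_
  by_cases h : p.1 ∈ p.2.map Prod.fst <;> simp [forthStep, h]

theorem computable_backStep (hg : Computable₂ g) : Computable₂ (backStep g) := by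
  have hfst := Primrec.list_map_fst (α := ℕ) (β := ℕ) |>.to_comp
  have hsnd := Primrec.list_map_snd (α := ℕ) (β := ℕ) |>.to_comp
  refine (Computable.cond (Primrec.list_mem.decide.to_comp.comp (hsnd.comp Computable.snd)
      Computable.fst) Computable.snd (Computable.list_cons.comp
        (Computable.pair (hg.comp Computable.fst (hfst.comp Computable.snd)) Computable.fst)
        Computable.snd)).of_eq fun p => ?_
  by_cases h : p.1 ∈ p.2.map Prod.snd <;> simp [backStep, h]

def backAndForth (f g : ℕ → List ℕ → ℕ) : ℕ → List (ℕ × ℕ)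
  | 0 => []
  | n + 1 => backStep g n (forthStep f n (backAndForth f g n))

theorem computable_backAndForth (hf : Computable₂ f) (hg : Computable₂ g) :
    Computable (backAndForth f g) := by
  refine (Computable.nat_rec Computable.id (Computable.const [])
    ((computable_backStep hg).comp (Computable.fst.comp Computable.snd)
      ((computable_forthStep hf).comp (Computable.fst.comp Computable.snd)
        (Computable.snd.comp Computable.snd))).to₂).of_eq fun n => ?_
  induction n with
  | zero => rfl
  | succ n ih => simp [backAndForth, ← ih]

theorem isMatching_backAndForth (hf : ∀ i L, R i (f i L) ∧ f i L ∉ L)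
    (hg : ∀ j L, R (g j L) j ∧ g j L ∉ L) (n : ℕ) : IsMatching R (backAndForth f g n) := by
  induction n with
  | zero => exact IsMatching.nil
  | succ n ih => exact (ih.forthStep hf n).backStep hg n

theorem backAndForth_subset_of_le {m n : ℕ} (h : m ≤ n) :
    backAndForth f g m ⊆ backAndForth f g n := by
  induction n, h using Nat.le_induction with
  | base => exact List.Subset.refl _
  | succ n _ ih =>
    exact List.Subset.trans ih
      (List.Subset.trans (subset_forthStep f n _) (subset_backStep g n _))

theorem mem_map_fst_backAndForth (n : ℕ) : n ∈ (backAndForth f g (n + 1)).map Prod.fst :=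
  List.map_subset _ (subset_backStep g n _) (mem_map_fst_forthStep f n _)

theorem mem_map_snd_backAndForth (n : ℕ) : n ∈ (backAndForth f g (n + 1)).map Prod.snd :=
  mem_map_snd_backStep g n _

theorem exists_computable_bijective_of_fresh (hfc : Computable₂ f) (hgc : Computable₂ g)
    (hf : ∀ i L, R i (f i L) ∧ f i L ∉ L) (hg : ∀ j L, R (g j L) j ∧ g j L ∉ L) :
    ∃ π : ℕ → ℕ, Computable π ∧ Function.Bijective π ∧ ∀ i, R i (π i) := by
  set π : ℕ → ℕ := fun i => ((backAndForth f g (i + 1)).lookup i).getD 0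
  have hπ : ∀ i, (i, π i) ∈ backAndForth f g (i + 1) := fun i =>
    List.mem_lookup_getD (mem_map_fst_backAndForth i) 0
  have hπle : ∀ i n, i < n → (i, π i) ∈ backAndForth f g n := fun i n hin =>
    backAndForth_subset_of_le hin (hπ i)
  have hM := isMatching_backAndForth hf hg
  refine ⟨π, ?_, ⟨fun i i' hii' => ?_, fun j => ?_⟩, fun i => (hM _ _ (hπ i)).1⟩
  · exact Primrec.list_lookup.to_comp.comp
      ((computable_backAndForth hfc hgc).comp Computable.succ) Computable.id |>.option_getD
        (Computable.const 0)
  · have hi := hM _ _ (hπle i (max i i' + 1) (by omega))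
    exact (hi.2 _ (hπle i' (max i i' + 1) (by omega))).2 hii'
  · obtain ⟨⟨i, j'⟩, hij, rfl⟩ := List.mem_map.1 (mem_map_snd_backAndForth (f := f) (g := g) j)
    refine ⟨i, ?_⟩
    have hij' := backAndForth_subset_of_le (show j' + 1 ≤ max i j' + 1 by omega) hij
    exact ((hM _ _ (hπle i (max i j' + 1) (by omega))).2 _ hij').1 rfl

end BackAndForth

theorem pair_succ_mem_graphE {q : ℕ →. ℕ} {x z : ℕ} :
    Nat.pair x (z + 1) ∈ graphE q ↔ q x = Part.some z := by
  refine ⟨?_, fun hq => Or.inr ⟨x, z, hq, rfl⟩⟩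
  rintro (⟨y, hy⟩ | ⟨x', z', hq, he⟩)
  · simp [Nat.pair_eq_pair] at hy
  · obtain ⟨rfl, rfl⟩ : x = x' ∧ z = z' := by simpa [Nat.pair_eq_pair] using he
    exact hq

theorem Partrec₂.exists_computable_range_eq_graphE {f : ℕ → ℕ →. ℕ} (hf : Partrec₂ f) :
    ∃ k : ℕ → ℕ → ℕ, Computable₂ k ∧ ∀ a, Set.range (k a) = graphE (f a) := by
  obtain ⟨c, hc⟩ := Code.exists_code.1 (Partrec₂.unpaired'.2 hf)
  have hcf : ∀ a x, eval c (Nat.pair a x) = f a x := by simp [hc]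
  -- `m` encodes an argument `x` and a step bound `s`; no result within `s` steps gives a filler.
  let k : ℕ → ℕ → ℕ := fun a m =>
    Nat.pair m.unpair.1 (((evaln m.unpair.2 c (Nat.pair a m.unpair.1)).map (· + 1)).getD 0)
  have hk : Primrec₂ k :=
    Primrec₂.natPair.comp (Primrec.fst.comp (Primrec.unpair.comp Primrec.snd))
      (Primrec.option_getD.comp (Primrec.option_map (primrec_evaln.comp (Primrec.pair
          (Primrec.pair (Primrec.snd.comp (Primrec.unpair.comp Primrec.snd)) (Primrec.const c))
          (Primrec₂.natPair.comp Primrec.fst (Primrec.fst.comp (Primrec.unpair.comp Primrec.snd)))))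
        (Primrec.succ.comp₂ Primrec₂.right)) (Primrec.const 0))
  refine ⟨k, hk.to_comp, fun a => Set.ext fun n => ⟨?_, ?_⟩⟩
  · rintro ⟨m, rfl⟩
    cases hs : evaln m.unpair.2 c (Nat.pair a m.unpair.1) with
    | none =>
      simp only [k, hs, Option.map_none, Option.getD_none]
      exact Or.inl ⟨_, rfl⟩
    | some z =>
      simp only [k, hs, Option.map_some, Option.getD_some, pair_succ_mem_graphE]
      exact Part.eq_some_iff.2 (hcf a _ ▸ evaln_sound hs)
  · rintro (⟨y, rfl⟩ | ⟨x, z, hz, rfl⟩)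
    · exact ⟨Nat.pair y 0, by simp [k, evaln]⟩
    · obtain ⟨s, hs⟩ := evaln_complete.1 (hcf a x ▸ Part.eq_some_iff.1 hz)
      exact ⟨Nat.pair x s, by simp [k, Option.mem_def.1 hs]⟩

theorem partrec_of_range_eq_graphE {q : ℕ →. ℕ} {h : ℕ → ℕ} (hh : Computable h)
    (hq : Set.range h = graphE q) : Partrec q := by
  let val : ℕ → ℕ → Option ℕ := fun x m =>
    if (h m).unpair.1 = x ∧ 0 < (h m).unpair.2 then some ((h m).unpair.2 - 1) else none
  have hdecode : Primrec₂ fun x u : ℕ =>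
      if u.unpair.1 = x ∧ 0 < u.unpair.2 then some (u.unpair.2 - 1) else none :=
    Primrec.ite ((Primrec.eq.comp (Primrec.fst.comp (Primrec.unpair.comp Primrec.snd))
        Primrec.fst).and (Primrec.nat_lt.comp (Primrec.const 0)
          (Primrec.snd.comp (Primrec.unpair.comp Primrec.snd))))
      (Primrec.option_some.comp (Primrec.nat_sub.comp
        (Primrec.snd.comp (Primrec.unpair.comp Primrec.snd)) (Primrec.const 1)))
      (Primrec.const none)
  have hval : Computable₂ val := hdecode.to_comp.comp Computable.fst (hh.comp Computable.snd)
  have hmem : ∀ x z, z ∈ Nat.rfindOpt (val x) → q x = Part.some z := by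
    intro x z hz
    obtain ⟨m, hm⟩ := Nat.rfindOpt_spec hz
    simp only [val, Option.mem_def, Option.ite_none_right_eq_some, Option.some.injEq] at hm
    obtain ⟨⟨hx, hpos⟩, rfl⟩ := hm
    rw [← pair_succ_mem_graphE, ← hq, Nat.sub_add_cancel hpos, ← hx, Nat.pair_unpair]
    exact Set.mem_range_self m
  refine (Partrec.rfindOpt hval).of_eq fun x => Part.ext fun z => ⟨fun hz => ?_, fun hz => ?_⟩
  · exact Part.eq_some_iff.1 (hmem x z hz)
  · obtain ⟨m, hm⟩ : Nat.pair x (z + 1) ∈ Set.range h :=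
      hq ▸ pair_succ_mem_graphE.2 (Part.eq_some_iff.2 hz)
    have hdom : (Nat.rfindOpt (val x)).Dom := Nat.rfindOpt_dom.2 ⟨m, z, by simp [val, hm]⟩
    have hw := hmem x _ (Part.get_mem hdom)
    rw [hw, Part.mem_some_iff] at hz
    exact hz ▸ Part.get_mem hdom

theorem QGN1.partrec₂ {θ : ℕ → ℕ →. ℕ} (hθ : QGN1 θ) : Partrec₂ θ := by
  obtain ⟨h, hh, hrange⟩ := hθ
  refine Partrec₂.unpaired.1 (partrec_of_range_eq_graphE hh ?_)
  rw [hrange]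
  unfold graphE
  congr 1
  ext n
  constructor
  · rintro ⟨i, x, z, hz, rfl⟩
    exact ⟨Nat.pair i x, z, by simpa using hz, rfl⟩
  · rintro ⟨y, z, hz, rfl⟩
    exact ⟨y.unpair.1, y.unpair.2, z, hz, by rw [Nat.pair_unpair]⟩

theorem QGN2.exists_computable_of_partrec₂ {A : Set ℕ} {ψ : ℕ → ℕ →. ℕ} (hψ : QGN2 A ψ)
    {f : ℕ → ℕ →. ℕ} (hf : Partrec₂ f) :
    ∃ v : ℕ → ℕ, Computable v ∧ ∀ i, f i ∈ SA A → ψ (v i) = f i := by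
  obtain ⟨k, hk, hkf⟩ := hf.exists_computable_range_eq_graphE
  obtain ⟨v, hv, hvk⟩ := hψ k hk
  exact ⟨v, hv, fun i hi => hvk i (f i) hi (hkf i)⟩

/-- For `u = ⟨e, ⟨i, n⟩⟩`: the function `ψ i` if code `e` outputs `0` at `⟨i, n⟩`, and the
constant `n % 2` if it outputs anything else. -/
def paddingMaster (ψ : ℕ → ℕ →. ℕ) (u x : ℕ) : Part ℕ :=
  (eval (ofNat Code u.unpair.1) u.unpair.2).bind fun b =>
    bif b == 0 then ψ u.unpair.2.unpair.1 x else Part.some (u.unpair.2.unpair.2 % 2)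

theorem Partrec₂.paddingMaster {ψ : ℕ → ℕ →. ℕ} (hψ : Partrec₂ ψ) :
    Partrec₂ (paddingMaster ψ) := by
  have hu : Computable fun p : (ℕ × ℕ) × ℕ => p.1.1.unpair.2 :=
    Computable.snd.comp (Computable.unpair.comp (Computable.fst.comp Computable.fst))
  exact Partrec.bind (eval_part.comp
      ((Computable.ofNat Code).comp (Computable.fst.comp (Computable.unpair.comp Computable.fst)))
      (Computable.snd.comp (Computable.unpair.comp Computable.fst)))
    (Partrec.cond (Primrec.beq.to_comp.comp Computable.snd (Computable.const 0))
      (hψ.comp (Computable.fst.comp (Computable.unpair.comp hu))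
        (Computable.snd.comp Computable.fst))
      (Primrec.nat_mod.to_comp.comp (Computable.snd.comp (Computable.unpair.comp hu))
        (Computable.const 2)).partrec)

theorem eq_and_infinite_range_of_repeat_eq_pure_mod_two {ψ : ℕ → ℕ →. ℕ} {J : ℕ → ℕ}
    {r : ℕ →. ℕ} (hJ : ∀ n, ψ (J n) = if ∃ q < n, J q = J n then PFun.pure (n % 2) else r) :
    (∀ n, ψ (J n) = r) ∧ (Set.range J).Infinite := by
  have hr : ∀ n, ψ (J n) = r := by
    intro n
    induction n using Nat.strong_induction_on with
    | _ n ih =>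
      by_cases hn : ∃ q < n, J q = J n
      · obtain ⟨q, hq, hJq⟩ := hn
        rw [← hJq, ih q hq]
      · rw [hJ, if_neg hn]
  have hrepeat : ∀ n, (∃ q < n, J q = J n) → r = PFun.pure (n % 2) := fun n hn => by
    rw [← hr n, hJ, if_pos hn]
  refine ⟨hr, infinite_range_of_forall_exists_fresh fun N => ?_⟩
  by_cases h0 : r = PFun.pure 0
  · refine ⟨2 * N + 1, by omega, fun q hq hJq => ?_⟩
    have h10 := congrFun ((hrepeat _ ⟨q, hq, hJq⟩).symm.trans h0) 0
    simp [PFun.pure, Nat.add_mod] at h10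
  · refine ⟨2 * N + 2, by omega, fun q hq hJq => h0 ?_⟩
    rw [hrepeat _ ⟨q, hq, hJq⟩]
    congr 1
    omega

theorem QuasiGodel.exists_padding {A : Set ℕ} {ψ : ℕ → ℕ →. ℕ} (hψ : QuasiGodel A ψ) :
    ∃ J : ℕ → ℕ → ℕ, Computable₂ J ∧ (∀ i n, ψ (J i n) = ψ i) ∧
      ∀ i, (Set.range (J i)).Infinite := by
  obtain ⟨hrange, hψ₁, hψ₂⟩ := hψ
  obtain ⟨v, hv, hvR⟩ := hψ₂.exists_computable_of_partrec₂ hψ₁.partrec₂.paddingMaster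
  have hvJ : Computable₂ fun (p : ℕ × ℕ) (n : ℕ) => v (Nat.pair p.1 (Nat.pair p.2 n)) :=
    hv.comp (Primrec₂.natPair.to_comp.comp (Computable.fst.comp Computable.fst)
      (Primrec₂.natPair.to_comp.comp (Computable.snd.comp Computable.fst) Computable.snd))
  have hrepeat : Computable₂ fun (c : Code) (m : ℕ) =>
      encode (decide (∃ q < m.unpair.2, v (Nat.pair (encode c) (Nat.pair m.unpair.1 q)) =
        v (Nat.pair (encode c) (Nat.pair m.unpair.1 m.unpair.2)))) := by
    have := (hvJ.decide_exists_lt_eq.comp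
      (Computable.pair (Computable.encode.comp Computable.fst)
        (Computable.fst.comp (Computable.unpair.comp Computable.snd)))
      (Computable.snd.comp (Computable.unpair.comp Computable.snd)) :
        Computable fun p : Code × ℕ => _)
    exact Computable.encode.comp this
  -- Recursion theorem: `c` decides whether `J i n` repeats an earlier `J i q`.
  obtain ⟨c, hc⟩ := fixed_point₂ hrepeat.partrec₂
  set J : ℕ → ℕ → ℕ := fun i n => v (Nat.pair (encode c) (Nat.pair i n))
  have hmaster : ∀ i n, paddingMaster ψ (Nat.pair (encode c) (Nat.pair i n)) =
      if ∃ q < n, J i q = J i n then PFun.pure (n % 2) else ψ i := by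
    intro i n
    funext x
    by_cases hin : ∃ q < n, J i q = J i n <;> simp [paddingMaster, hc, hin, J, PFun.pure]
  have hψJ : ∀ i n, ψ (J i n) = if ∃ q < n, J i q = J i n then PFun.pure (n % 2) else ψ i := by
    intro i n
    rw [← hmaster]
    refine hvR _ (hmaster i n ▸ ?_)
    split_ifs
    · exact Or.inl ⟨fun _ => n % 2, Computable.const _, fun _ => rfl⟩
    · exact hrange ▸ Set.mem_range_self (f := ψ) i
  exact ⟨J, hvJ.comp (Computable.pair (Computable.const _) Computable.fst) Computable.snd,
    fun i => (eq_and_infinite_range_of_repeat_eq_pure_mod_two (hψJ i)).1,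
    fun i => (eq_and_infinite_range_of_repeat_eq_pure_mod_two (hψJ i)).2⟩

theorem QuasiGodel.exists_computable_fresh_index {A : Set ℕ} {θ ψ : ℕ → ℕ →. ℕ}
    (hθ : QuasiGodel A θ) (hψ : QuasiGodel A ψ) :
    ∃ f : ℕ → List ℕ → ℕ, Computable₂ f ∧ ∀ i L, θ i = ψ (f i L) ∧ f i L ∉ L := by
  obtain ⟨t, ht, htθ⟩ := hψ.2.2.exists_computable_of_partrec₂ hθ.2.1.partrec₂
  obtain ⟨J, hJ, hJψ, hJinf⟩ := hψ.exists_padding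
  obtain ⟨fr, hfr, hfrJ⟩ := exists_computable_fresh hJ hJinf
  refine ⟨fun i L => fr (t i) L, hfr.comp (ht.comp Computable.fst) Computable.snd, fun i L => ?_⟩
  obtain ⟨⟨n, hn⟩, hL⟩ := hfrJ (t i) L
  refine ⟨?_, hL⟩
  show θ i = ψ (fr (t i) L)
  rw [← hn, hJψ, htθ i (hθ.1 ▸ Set.mem_range_self i)]

theorem isomorphism_theorem_general (A : Set ℕ)
    (θ ψ : ℕ → ℕ →. ℕ) (hθ : QuasiGodel A θ) (hψ : QuasiGodel A ψ) :
    ∃ g : ℕ → ℕ, Computable g ∧ Function.Bijective g ∧ ∀ i, θ i = ψ (g i) := by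
  obtain ⟨f, hf, hfθ⟩ := hθ.exists_computable_fresh_index hψ
  obtain ⟨g, hg, hgψ⟩ := hψ.exists_computable_fresh_index hθ
  exact exists_computable_bijective_of_fresh (R := fun i j => θ i = ψ j) hf hg hfθ
    fun j L => ⟨(hgψ j L).1.symm, (hgψ j L).2⟩

/-- Isomorphism Theorem: any two quasi-Gödel numberings of `SA A` are computably
isomorphic. -/
theorem isomorphism_theorem (A : Set ℕ) (hAinf : A.Infinite) (hAce : CEset A)
    (θ ψ : ℕ → ℕ →. ℕ) (hθ : QuasiGodel A θ) (hψ : QuasiGodel A ψ) :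
    ∃ g : ℕ → ℕ, Computable g ∧ Function.Bijective g ∧ ∀ i, θ i = ψ (g i) :=
  isomorphism_theorem_general A θ ψ hθ hψ
end

section
/- (Completeness of quasi-Gödel numberings) Let A ⊆ ℕ be an infinite computably enumerable set and let θ be a quasi-Gödel numbering of S_A. Then θ is complete with the nowhere-defined function as distinguished element: for every unary partial recursive function p : ℕ →. ℕ there exists a total computable g : ℕ → ℕ such that for all i: if p i = Part.some j for some j then θ (g i) = θ j, and if p i is undefined then θ (g i) is the nowhere-defined function (θ (g i) x is undefined for every x). -/
/-!
Let `c` be a code for `p` and `h` the (QGN I) enumeration of the extended graph of the universal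
function `⟨i, x⟩ ↦ θ i x`. On input `i`, stage `⟨s, t⟩` outputs the padding `⟨t, 0⟩` while `c` has
not halted on `i` within `s` steps; once it has halted with value `j`, it outputs `⟨x, z + 1⟩` if
`h t = ⟨⟨j, x⟩, z + 1⟩` and `⟨0, 0⟩` otherwise. This enumerates `graphE (θ j)` when `p i = j`, and
the extended graph of the nowhere-defined function, an initial-segment function, when `p i`
diverges; both functions lie in `S_A`, so (QGN II) converts the enumeration into a `θ`-index.
-/

namespace QuasiGodel

open Nat.Partrec Nat.Partrec.Code

-- `⟨0, 0⟩` is harmless padding: it lies in every extended graph.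
def sectionEntry (j n : ℕ) : ℕ :=
  if n.unpair.2 ≠ 0 ∧ n.unpair.1.unpair.1 = j then Nat.pair n.unpair.1.unpair.2 n.unpair.2
  else Nat.pair 0 0

theorem primrec₂_sectionEntry : Primrec₂ sectionEntry := by
  have hz : Primrec fun p : ℕ × ℕ => p.2.unpair.2 := Primrec.snd.comp (Primrec.unpair.comp .snd)
  have hx : Primrec fun p : ℕ × ℕ => p.2.unpair.1.unpair :=
    Primrec.unpair.comp (Primrec.fst.comp (Primrec.unpair.comp .snd))
  refine Primrec.ite (PrimrecPred.and (PrimrecPred.not (Primrec.eq.comp hz (Primrec.const 0)))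
    (Primrec.eq.comp (Primrec.fst.comp hx) .fst))
    (Primrec₂.natPair.comp (Primrec.snd.comp hx) hz) (Primrec.const _)

theorem graphE_section (q : ℕ →. ℕ) (j : ℕ) :
    graphE (fun x => q (Nat.pair j x)) =
      {n | ∃ y, n = Nat.pair y 0} ∪ sectionEntry j '' graphE q := by
  ext n
  simp only [graphE, Set.mem_union, Set.mem_ofPred_eq, Set.mem_image]
  constructor
  · rintro (h | ⟨x, z, hxz, rfl⟩)
    · exact .inl h
    · exact .inr ⟨Nat.pair (Nat.pair j x) (z + 1), .inr ⟨_, z, hxz, rfl⟩, by simp [sectionEntry]⟩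
  · rintro (h | ⟨_, ⟨y, rfl⟩ | ⟨x, z, hxz, rfl⟩, rfl⟩)
    · exact .inl h
    · exact .inl ⟨0, by simp [sectionEntry]⟩
    · by_cases hj : x.unpair.1 = j
      · subst hj
        exact .inr ⟨x.unpair.2, z, by simpa using hxz, by simp [sectionEntry]⟩
      · exact .inl ⟨0, by simp [sectionEntry, hj]⟩

theorem graphE_none : graphE (fun _ => Part.none) = {n | ∃ y, n = Nat.pair y 0} := by
  simp [graphE]

theorem qgn1_iff (θ : ℕ → ℕ →. ℕ) :
    QGN1 θ ↔ ∃ h : ℕ → ℕ, Computable h ∧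
      Set.range h = graphE (fun n => θ n.unpair.1 n.unpair.2) := by
  suffices graphE (fun n => θ n.unpair.1 n.unpair.2) = {n | ∃ w, n = Nat.pair w 0} ∪
      {n | ∃ i x z, θ i x = Part.some z ∧ n = Nat.pair (Nat.pair i x) (z + 1)} by
    rw [this]; rfl
  ext n
  simp only [graphE, Set.mem_union, Set.mem_ofPred_eq]
  refine or_congr Iff.rfl ⟨?_, ?_⟩
  · rintro ⟨x, z, hxz, rfl⟩
    exact ⟨x.unpair.1, x.unpair.2, z, hxz, by simp⟩
  · rintro ⟨i, x, z, hxz, rfl⟩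
    exact ⟨Nat.pair i x, z, by simpa using hxz, rfl⟩

def stagedEnum (c : Code) (h : ℕ → ℕ) (i m : ℕ) : ℕ :=
  (evaln m.unpair.1 c i).elim (Nat.pair m.unpair.2 0) fun j => sectionEntry j (h m.unpair.2)

theorem computable₂_stagedEnum (c : Code) {h : ℕ → ℕ} (hh : Computable h) :
    Computable₂ (stagedEnum c h) := by
  have hm : Computable fun p : ℕ × ℕ => p.2.unpair := Computable.unpair.comp .snd
  refine (Computable.option_casesOn
    (primrec_evaln.to_comp.comp (((Computable.fst.comp hm).pair (.const c)).pair .fst))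
    (Primrec₂.natPair.to_comp.comp (Computable.snd.comp hm) (.const 0))
    (primrec₂_sectionEntry.to_comp.comp .snd
      (hh.comp (Computable.snd.comp (hm.comp .fst)))).to₂).of_eq fun p => by
      simp only [stagedEnum]; cases evaln p.2.unpair.1 c p.1 <;> rfl

theorem range_stagedEnum_of_mem (c : Code) (h : ℕ → ℕ) {i j : ℕ} (hj : j ∈ eval c i) :
    Set.range (stagedEnum c h i) =
      {n | ∃ y, n = Nat.pair y 0} ∪ sectionEntry j '' Set.range h := by
  have hstage : ∀ s j', evaln s c i = some j' → j' = j := fun s j' hs =>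
    Part.mem_unique (evaln_sound hs) hj
  ext n
  simp only [Set.mem_range, Set.mem_union, Set.mem_ofPred_eq, Set.mem_image, stagedEnum]
  constructor
  · rintro ⟨m, rfl⟩
    rcases hs : evaln m.unpair.1 c i with _ | j'
    · exact .inl ⟨m.unpair.2, rfl⟩
    · obtain rfl := hstage _ _ hs
      exact .inr ⟨_, ⟨m.unpair.2, rfl⟩, rfl⟩
  · rintro (⟨y, rfl⟩ | ⟨_, ⟨t, rfl⟩, rfl⟩)
    · exact ⟨Nat.pair 0 y, by simp [evaln]⟩
    · obtain ⟨s, hs⟩ := evaln_complete.1 hj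
      exact ⟨Nat.pair s t, by simp [Option.mem_def.1 hs]⟩

theorem range_stagedEnum_of_not_dom (c : Code) (h : ℕ → ℕ) {i : ℕ} (hi : ¬(eval c i).Dom) :
    Set.range (stagedEnum c h i) = {n | ∃ y, n = Nat.pair y 0} := by
  have hstage : ∀ s, evaln s c i = Option.none := fun s =>
    Option.eq_none_iff_forall_not_mem.2 fun _ hs => hi (Part.dom_iff_mem.2 ⟨_, evaln_sound hs⟩)
  ext n
  simp only [Set.mem_range, Set.mem_ofPred_eq, stagedEnum, hstage, Option.elim_none]
  exact ⟨fun ⟨m, hm⟩ => ⟨m.unpair.2, hm.symm⟩, fun ⟨y, hy⟩ => ⟨Nat.pair 0 y, by simp [hy]⟩⟩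

theorem none_mem_SA (A : Set ℕ) : (fun _ => Part.none) ∈ SA A :=
  .inr (.inl (by simp))

end QuasiGodel

open QuasiGodel in
theorem quasiGodel_complete_general (A : Set ℕ)
    (θ : ℕ → ℕ →. ℕ) (hθ : QuasiGodel A θ)
    (p : ℕ →. ℕ) (hp : Partrec p) :
    ∃ g : ℕ → ℕ, Computable g ∧ ∀ i,
      (∀ j, p i = Part.some j → θ (g i) = θ j) ∧
      (¬ (p i).Dom → ∀ x, ¬ (θ (g i) x).Dom) := by
  obtain ⟨hrange, hqgn1, hqgn2⟩ := hθ
  obtain ⟨h, hh, hrangeh⟩ := (qgn1_iff θ).1 hqgn1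
  obtain ⟨c, rfl⟩ := Nat.Partrec.Code.exists_code.1 (Partrec.nat_iff.1 hp)
  obtain ⟨v, hv, hvθ⟩ := hqgn2 _ (computable₂_stagedEnum c hh)
  refine ⟨v, hv, fun i => ⟨fun j hj => ?_, fun hi x => ?_⟩⟩
  · refine hvθ i _ (hrange ▸ Set.mem_range_self j) ?_
    rw [range_stagedEnum_of_mem c h (hj ▸ Part.mem_some j), hrangeh]
    simpa using (graphE_section (fun n => θ n.unpair.1 n.unpair.2) j).symm
  · rw [hvθ i _ (none_mem_SA A) (by rw [range_stagedEnum_of_not_dom c h hi, graphE_none])]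
    exact Part.not_none_dom

/-- Completeness of quasi-Gödel numberings, with the nowhere-defined function as
distinguished element. -/
theorem quasiGodel_complete (A : Set ℕ) (hAinf : A.Infinite) (hAce : CEset A)
    (θ : ℕ → ℕ →. ℕ) (hθ : QuasiGodel A θ)
    (p : ℕ →. ℕ) (hp : Partrec p) :
    ∃ g : ℕ → ℕ, Computable g ∧ ∀ i,
      (∀ j, p i = Part.some j → θ (g i) = θ j) ∧
      (¬ (p i).Dom → ∀ x, ¬ (θ (g i) x).Dom) :=
  quasiGodel_complete_general A θ hθ p hp
end
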